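/- arXiv:0906.2279 — 2 statements merged into one kernel-verified Lean document; each statement's English description precedes it below -/
import Mathlib

section
/- For α > -1 and nonnegative integer n, the inverse of the Hankel matrix ((α+1)_{j+k})_{0≤j,k≤n} has (j,k)-entry γ_{j,k} = Σ_{ℓ=0}^{n} (α+1)_ℓ (-ℓ)_j (-ℓ)_k / (ℓ! (α+1)_j (α+1)_k j! k!). -/
/-!
With `c = α + 1` we check `H * Γ = 1` entrywise. Writing `(c)_{i+j} = (c)_i (c+i)_j`, the sum over
`j` is a terminating Gauss sum `₂F₁(-ℓ, c+i; c; 1)`, which Chu–Vandermonde evaluates to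
`(-i)_ℓ / (c)_ℓ`. What remains, `∑_ℓ (-i)_ℓ (-ℓ)_k / ℓ! = δ_{ik} k!`, is binomial inversion in
disguise; after the shift `ℓ = k + m` it is the case `b = c` of Chu–Vandermonde.
-/

/-- The shifted factorial (Pochhammer symbol) (x)ₙ = x(x+1)⋯(x+n-1). -/
noncomputable def poch (x : ℝ) (n : ℕ) : ℝ := ∏ i ∈ Finset.range n, (x + i)

open Finset
open scoped Nat

lemma poch_zero (x : ℝ) : poch x 0 = 1 := prod_range_zero _

lemma poch_succ (x : ℝ) (n : ℕ) : poch x (n + 1) = poch x n * (x + n) :=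
  prod_range_succ _ _

lemma poch_succ_left (x : ℝ) (n : ℕ) : poch x (n + 1) = x * poch (x + 1) n := by
  simp only [poch, prod_range_succ', Nat.cast_succ, Nat.cast_zero, add_zero, add_assoc,
    add_comm (1 : ℝ)]
  ring

lemma poch_add (x : ℝ) (a b : ℕ) : poch x (a + b) = poch x a * poch (x + a) b := by
  simp only [poch, prod_range_add, Nat.cast_add, add_assoc]

lemma poch_ne_zero {c : ℝ} (hc : ∀ m : ℕ, c + m ≠ 0) (n : ℕ) : poch c n ≠ 0 :=
  prod_ne_zero_iff.mpr fun i _ => hc i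

lemma poch_zero_left_succ (n : ℕ) : poch 0 (n + 1) = 0 := by
  rw [poch_succ_left, zero_mul]

lemma poch_neg_nat_of_lt {l k : ℕ} (h : l < k) : poch (-l) k = 0 :=
  prod_eq_zero (mem_range.mpr h) (neg_add_cancel _)

lemma poch_neg_nat {N m : ℕ} (h : m ≤ N) :
    poch (-N) m = (-1) ^ m * N.descFactorial m := by
  rw [Nat.descFactorial_eq_prod_range, Nat.cast_prod, ← card_range m, ← prod_const, card_range,
    ← prod_mul_distrib]
  refine prod_congr rfl fun i hi => ?_
  rw [Nat.cast_sub (by have := mem_range.mp hi; omega)]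
  ring

lemma poch_sub_one (x : ℝ) (j : ℕ) : poch (x - 1) j = poch x j - j * poch x (j - 1) := by
  cases j with
  | zero => simp [poch_zero]
  | succ m =>
    rw [poch_succ_left, sub_add_cancel, poch_succ, Nat.add_sub_cancel]
    push_cast
    ring

lemma sum_range_poch_neg_nat_mul {l n : ℕ} (h : l ≤ n) (f : ℕ → ℝ) :
    ∑ j ∈ range (n + 1), poch (-l) j * f j = ∑ j ∈ range (l + 1), poch (-l) j * f j := by
  refine (sum_subset (range_subset_range.mpr (by omega)) fun j _ hj => ?_).symm
  rw [poch_neg_nat_of_lt (by simpa using hj), zero_mul]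

theorem chu_vandermonde (l : ℕ) (b : ℝ) {c : ℝ} (hc : ∀ m : ℕ, c + m ≠ 0) :
    ∑ j ∈ range (l + 1), poch (-l) j * (poch b j / (poch c j * j !)) =
      poch (c - b) l / poch c l := by
  induction l generalizing b c with
  | zero => simp [poch_zero]
  | succ l ih =>
    have hc1 : ∀ m : ℕ, c + 1 + m ≠ 0 := fun m => by
      simpa [add_assoc, add_comm (1 : ℝ)] using hc (m + 1)
    have hc0 : c ≠ 0 := by simpa using hc 0
    have hsplit : ∀ j, poch (-(l + 1 : ℕ)) j = poch (-l) j - j * poch (-l) (j - 1) := fun j => by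
      rw [← poch_sub_one]; push_cast; ring_nf
    have hfirst : ∑ j ∈ range (l + 2), poch (-l) j * (poch b j / (poch c j * j !)) =
        poch (c - b) l / poch c l := by
      rw [sum_range_succ, poch_neg_nat_of_lt (Nat.lt_succ_self l), zero_mul, add_zero, ih b hc]
    have hsecond : ∑ j ∈ range (l + 2), j * poch (-l) (j - 1) * (poch b j / (poch c j * j !)) =
        b / c * (poch (c - b) l / poch (c + 1) l) := by
      rw [sum_range_succ', Nat.cast_zero, zero_mul, zero_mul, add_zero,
        show c - b = c + 1 - (b + 1) by ring, ← ih (b + 1) hc1, mul_sum]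
      refine sum_congr rfl fun j _ => ?_
      have := poch_ne_zero hc1 j
      rw [poch_succ_left b, poch_succ_left c, Nat.factorial_succ, Nat.add_sub_cancel]
      field_simp
      push_cast
      ring
    have hcl : c + l ≠ 0 := hc l
    have hP : poch c l = c * poch (c + 1) l / (c + l) := by
      rw [← poch_succ_left, poch_succ, mul_div_cancel_right₀ _ hcl]
    have := poch_ne_zero hc1 l
    simp only [hsplit, sub_mul, sum_sub_distrib, hfirst, hsecond]
    rw [poch_succ (c - b), poch_succ_left c l, hP]
    field_simp
    ring

lemma sum_poch_neg_nat_div_factorial (N : ℕ) :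
    ∑ j ∈ range (N + 1), poch (-N) j / j ! = if N = 0 then 1 else 0 := by
  have h1 : ∀ m : ℕ, (1 : ℝ) + m ≠ 0 := fun m => by positivity
  have hterm : ∀ j, poch (-N) j / j ! = poch (-N) j * (poch 1 j / (poch 1 j * j !)) := fun j => by
    rw [div_mul_cancel_left₀ (poch_ne_zero h1 j), div_eq_mul_inv]
  rw [sum_congr rfl fun j _ => hterm j, chu_vandermonde N 1 h1, sub_self]
  cases N with
  | zero => simp [poch_zero]
  | succ N => simp [poch_zero_left_succ]

lemma poch_neg_nat_add_div_factorial (k m : ℕ) :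
    poch (-(k + m : ℕ)) k / (k + m)! = (-1) ^ k / m ! := by
  have h := Nat.factorial_mul_descFactorial (Nat.le_add_right k m)
  rw [Nat.add_sub_cancel_left] at h
  rw [poch_neg_nat (Nat.le_add_right k m), div_eq_div_iff (by positivity) (by positivity), ← h]
  push_cast
  ring

lemma sum_poch_neg_nat_orthogonal {i n : ℕ} (hi : i ≤ n) (k : ℕ) :
    ∑ l ∈ range (n + 1), poch (-i) l * (poch (-l) k / l !) = if i = k then (k ! : ℝ) else 0 := by
  rw [sum_range_poch_neg_nat_mul hi]
  rcases lt_or_ge i k with hik | hki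
  · rw [if_neg hik.ne]
    refine sum_eq_zero fun l hl => ?_
    rw [poch_neg_nat_of_lt (l := l) (by simp at hl; omega), zero_div, mul_zero]
  obtain ⟨d, rfl⟩ := Nat.exists_eq_add_of_le hki
  have hvanish : ∑ l ∈ range k, poch (-(k + d : ℕ)) l * (poch (-l) k / l !) = 0 :=
    sum_eq_zero fun l hl => by rw [poch_neg_nat_of_lt (mem_range.mp hl), zero_div, mul_zero]
  have hshift : ∀ m, poch (-(k + d : ℕ)) (k + m) * (poch (-(k + m : ℕ)) k / (k + m)!) =
      (-1) ^ k * poch (-(k + d : ℕ)) k * (poch (-d) m / m !) := fun m => by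
    rw [poch_add, poch_neg_nat_add_div_factorial,
      show -((k + d : ℕ) : ℝ) + k = -d by push_cast; ring]
    ring
  rw [add_assoc, sum_range_add, hvanish, zero_add, sum_congr rfl fun m _ => hshift m, ← mul_sum,
    sum_poch_neg_nat_div_factorial]
  rcases Nat.eq_zero_or_pos d with rfl | hd
  · have hkk := poch_neg_nat_add_div_factorial k 0
    simp only [add_zero, Nat.factorial_zero, Nat.cast_one, div_one] at hkk
    rw [div_eq_iff (by positivity)] at hkk
    rw [if_pos rfl, add_zero, if_pos rfl, hkk, ← mul_assoc, ← pow_add, ← two_mul, pow_mul]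
    norm_num
  · rw [if_neg hd.ne', if_neg (by omega), mul_zero]

lemma sum_poch_add_mul_poch_neg_div {c : ℝ} (hc : ∀ m : ℕ, c + m ≠ 0) (i : ℕ) {l n : ℕ}
    (hl : l ≤ n) :
    ∑ j ∈ range (n + 1), poch c (i + j) * (poch (-l) j / (poch c j * j !)) =
      poch c i * (poch (-i) l / poch c l) := by
  have hterm : ∀ j, poch c (i + j) * (poch (-l) j / (poch c j * j !)) =
      poch c i * (poch (-l) j * (poch (c + i) j / (poch c j * j !))) := fun j => by
    rw [poch_add]; ring
  rw [sum_congr rfl fun j _ => hterm j, ← mul_sum, sum_range_poch_neg_nat_mul hl,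
    chu_vandermonde l _ hc, sub_add_cancel_left]

theorem pochHankel_mul_eq_one {c : ℝ} (hc : ∀ m : ℕ, c + m ≠ 0) (n : ℕ) :
    (Matrix.of fun j k : Fin (n + 1) => poch c (j.1 + k.1)) *
      (Matrix.of fun j k : Fin (n + 1) =>
        ∑ l ∈ range (n + 1), poch c l * poch (-(l : ℝ)) j.1 * poch (-(l : ℝ)) k.1 /
          ((l ! : ℝ) * poch c j.1 * poch c k.1 * (j.1 !) * (k.1 !))) = 1 := by
  ext i k
  have hck := poch_ne_zero hc k
  rw [Matrix.mul_apply, Matrix.one_apply]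
  simp only [Matrix.of_apply]
  rw [Fin.sum_univ_eq_sum_range (fun j => poch c (i + j) * ∑ l ∈ range (n + 1),
    poch c l * poch (-(l : ℝ)) j * poch (-(l : ℝ)) k /
      ((l ! : ℝ) * poch c j * poch c k * j ! * k !))]
  calc _ = ∑ l ∈ range (n + 1), poch c l * poch (-l) k / (l ! * poch c k * k !) *
          ∑ j ∈ range (n + 1), poch c (i + j) * (poch (-l) j / (poch c j * j !)) := by
        simp only [mul_sum]
        rw [sum_comm]
        refine sum_congr rfl fun l _ => sum_congr rfl fun j _ => ?_
        field_simp
    _ = ∑ l ∈ range (n + 1), poch c i / (poch c k * k !) * (poch (-i) l * (poch (-l) k / l !)) := by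
        refine sum_congr rfl fun l hl => ?_
        have := poch_ne_zero hc l
        rw [sum_poch_add_mul_poch_neg_div hc i (Nat.lt_succ_iff.mp (mem_range.mp hl))]
        field_simp
    _ = _ := by
        rw [← mul_sum, sum_poch_neg_nat_orthogonal (Nat.lt_succ_iff.mp i.isLt)]
        by_cases hik : i = k
        · rw [if_pos (congrArg Fin.val hik), if_pos hik, hik]
          field_simp
        · rw [if_neg (Fin.val_injective.ne hik), if_neg hik, mul_zero]

/-- The inverse of the Hankel matrix ((α+1)_{j+k})_{0≤j,k≤n} has entries
γ_{j,k} = Σ_{ℓ=0}^{n} (α+1)_ℓ (-ℓ)_j (-ℓ)_k / (ℓ! (α+1)_j (α+1)_k j! k!). -/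
theorem stmt_2 (α : ℝ) (hα : -1 < α) (n : ℕ) :
    (Matrix.of fun j k : Fin (n+1) => poch (α+1) (j.1 + k.1))⁻¹ =
      Matrix.of fun j k : Fin (n+1) =>
        ∑ ℓ ∈ Finset.range (n+1),
          poch (α+1) ℓ * poch (-(ℓ:ℝ)) j.1 * poch (-(ℓ:ℝ)) k.1 /
            ((Nat.factorial ℓ : ℝ) * poch (α+1) j.1 * poch (α+1) k.1 *
              (Nat.factorial j.1) * (Nat.factorial k.1)) := by
  refine Matrix.inv_eq_right_inv (pochHankel_mul_eq_one (fun m => ?_) n)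
  have : (0 : ℝ) ≤ m := m.cast_nonneg
  exact ne_of_gt (by linarith)
end

section
/- For 0 < q < 1, Σ_{m=0}^{∞} q^{m(m-1)} b^m / ((q;q)_m (b;q)_m) = 1/(b;q)_∞ with b = q^{α+1} (α > -1); equivalently, ( Σ_{m=0}^{∞} q^{2·C(m,2)} q^{m(α+1)} / ((q;q)_m (q^{α+1};q)_m) )^{-1} = (q^{α+1};q)_∞. -/
/-- The q-Pochhammer symbol (a;q)ₘ = ∏_{i=0}^{m-1}(1 - a qⁱ). -/
noncomputable def qPoch (a q : ℝ) (n : ℕ) : ℝ := ∏ i ∈ Finset.range n, (1 - a * q ^ i)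

/-- (a;q)_∞ = ∏_{m≥0}(1 - a q^m). -/
noncomputable def qPochInf (a q : ℝ) : ℝ := ∏' m : ℕ, (1 - a * q ^ m)

/-!
With `[N m]_q` the Gaussian binomial, the finite identity
`∑_{m ≤ N} [N m]_q q^{m(m-1)} bᵐ / (b;q)ₘ = 1 / (b;q)_N` follows by induction on `N`: expanding
the `(N+1)`-st sum once with each of the two q-Pascal rules expresses it both as a sum `B` and as
`1 / (b;q)_N + b q^N B`. For `0 ≤ b, q < 1` the factor `[N m]_q (q;q)ₘ` lies in `[0, 1]` and tends
to `1` as `N → ∞`, so the partial sums of the series are squeezed between `1 / (b;q)_N` and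
`1 / (b;q)_∞`.
-/

open Finset Filter Topology

section qPoch

variable {a q : ℝ}

@[simp]
lemma qPoch_zero : qPoch a q 0 = 1 := prod_range_zero _

lemma qPoch_succ (n : ℕ) : qPoch a q (n + 1) = qPoch a q n * (1 - a * q ^ n) :=
  prod_range_succ _ _

lemma one_sub_mul_pow_pos (ha : a < 1) (hq0 : 0 ≤ q) (hq1 : q ≤ 1) (i : ℕ) :
    0 < 1 - a * q ^ i := by
  have hqi : q ^ i ≤ 1 := pow_le_one₀ hq0 hq1
  rcases le_or_gt 0 a with ha0 | ha0
  · nlinarith [mul_le_of_le_one_right ha0 hqi]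
  · nlinarith [mul_nonpos_of_nonpos_of_nonneg ha0.le (pow_nonneg hq0 i)]

lemma qPoch_pos (ha : a < 1) (hq0 : 0 ≤ q) (hq1 : q ≤ 1) (n : ℕ) : 0 < qPoch a q n :=
  prod_pos fun i _ => one_sub_mul_pow_pos ha hq0 hq1 i

lemma summable_norm_mul_pow (a : ℝ) (hq : |q| < 1) : Summable fun m : ℕ => ‖-(a * q ^ m)‖ := by
  simpa [abs_mul, abs_pow] using
    (summable_geometric_of_lt_one (abs_nonneg q) hq).mul_left |a|

lemma multipliable_one_sub_mul_pow (a : ℝ) (hq : |q| < 1) :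
    Multipliable fun m : ℕ => 1 - a * q ^ m := by
  simpa only [sub_eq_add_neg] using multipliable_one_add_of_summable (summable_norm_mul_pow a hq)

lemma tendsto_qPoch (a : ℝ) (hq : |q| < 1) :
    Tendsto (qPoch a q) atTop (𝓝 (qPochInf a q)) :=
  (multipliable_one_sub_mul_pow a hq).hasProd.tendsto_prod_nat

lemma qPochInf_ne_zero (hq : |q| < 1) (ha : ∀ m : ℕ, a * q ^ m ≠ 1) : qPochInf a q ≠ 0 := by
  simpa only [qPochInf, sub_eq_add_neg] using
    tprod_one_add_ne_zero_of_summable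
      (fun m => by simpa only [← sub_eq_add_neg, sub_ne_zero] using (ha m).symm)
      (summable_norm_mul_pow a hq)

end qPoch

/-- `qFalling q N m / (q;q)_m` is the Gaussian binomial `[N m]_q`. It vanishes for `m > N`
because the factor `i = N` is `1 - q ^ 0` (truncated subtraction). -/
noncomputable def qFalling (q : ℝ) (N m : ℕ) : ℝ := ∏ i ∈ range m, (1 - q ^ (N - i))

section qFalling

variable {q : ℝ}

@[simp]
lemma qFalling_zero_right (N : ℕ) : qFalling q N 0 = 1 := prod_range_zero _

lemma qFalling_succ_right (N m : ℕ) :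
    qFalling q N (m + 1) = qFalling q N m * (1 - q ^ (N - m)) :=
  prod_range_succ _ _

lemma qFalling_succ_succ (N m : ℕ) :
    qFalling q (N + 1) (m + 1) = (1 - q ^ (N + 1)) * qFalling q N m := by
  simp only [qFalling, prod_range_succ', Nat.sub_zero, Nat.add_sub_add_right]
  ring

lemma qFalling_eq_zero {N m : ℕ} (h : N < m) : qFalling q N m = 0 :=
  prod_eq_zero (mem_range.mpr h) (by simp)

lemma qFalling_succ_succ_eq_pow_mul_add (N m : ℕ) :
    qFalling q (N + 1) (m + 1) =
      q ^ (m + 1) * qFalling q N (m + 1) + (1 - q ^ (m + 1)) * qFalling q N m := by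
  rw [qFalling_succ_succ, qFalling_succ_right]
  rcases le_or_gt m N with h | h
  · rw [show N + 1 = (m + 1) + (N - m) by omega, pow_add]
    ring
  · simp [qFalling_eq_zero h]

lemma qFalling_succ_succ_eq_add_pow_mul (N m : ℕ) :
    qFalling q (N + 1) (m + 1) =
      qFalling q N (m + 1) + q ^ (N - m) * (1 - q ^ (m + 1)) * qFalling q N m := by
  rw [qFalling_succ_succ, qFalling_succ_right]
  rcases le_or_gt m N with h | h
  · rw [show N + 1 = (N - m) + (m + 1) by omega, pow_add]
    ring
  · simp [qFalling_eq_zero h]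

lemma qFalling_nonneg (hq0 : 0 ≤ q) (hq1 : q ≤ 1) (N m : ℕ) : 0 ≤ qFalling q N m :=
  prod_nonneg fun _ _ => sub_nonneg.mpr (pow_le_one₀ hq0 hq1)

lemma qFalling_le_one (hq0 : 0 ≤ q) (hq1 : q ≤ 1) (N m : ℕ) : qFalling q N m ≤ 1 :=
  prod_le_one (fun _ _ => sub_nonneg.mpr (pow_le_one₀ hq0 hq1))
    fun _ _ => sub_le_self _ (pow_nonneg hq0 _)

lemma tendsto_qFalling (hq : |q| < 1) (m : ℕ) :
    Tendsto (fun N => qFalling q N m) atTop (𝓝 1) := by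
  have hfactor (i : ℕ) : Tendsto (fun N => 1 - q ^ (N - i)) atTop (𝓝 1) := by
    simpa using tendsto_const_nhds.sub
      ((tendsto_pow_atTop_nhds_zero_of_abs_lt_one hq).comp (tendsto_sub_atTop_nat i))
  simpa [qFalling] using tendsto_finsetProd (range m) fun i _ => hfactor i

end qFalling

noncomputable def cauchyTerm (q b : ℝ) (m : ℕ) : ℝ :=
  q ^ (m * (m - 1)) * b ^ m / (qPoch q q m * qPoch b q m)

section Cauchy

variable {q b : ℝ} (hq0 : 0 ≤ q) (hq1 : q < 1) (hb0 : 0 ≤ b) (hb1 : b < 1)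

@[simp]
lemma cauchyTerm_zero : cauchyTerm q b 0 = 1 := by simp [cauchyTerm]

include hq0 hq1 hb1 in
lemma cauchyTerm_succ (m : ℕ) :
    (1 - q ^ (m + 1)) * cauchyTerm q b (m + 1) =
      q ^ (2 * m) * b / (1 - b * q ^ m) * cauchyTerm q b m := by
  have hqq := (qPoch_pos hq1 hq0 hq1.le m).ne'
  have hbq := (qPoch_pos hb1 hq0 hq1.le m).ne'
  have hq := (one_sub_mul_pow_pos hq1 hq0 hq1.le m).ne'
  have hb := (one_sub_mul_pow_pos hb1 hq0 hq1.le m).ne'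
  have hexp : (m + 1) * (m + 1 - 1) = m * (m - 1) + 2 * m := by
    cases m
    · rfl
    · simp only [Nat.add_sub_cancel]; ring
  rw [cauchyTerm, cauchyTerm, qPoch_succ, qPoch_succ, hexp, pow_add, ← pow_succ']
  rw [← pow_succ'] at hq
  field_simp
  ring

include hq0 hb0 hq1 hb1 in
lemma cauchyTerm_nonneg (m : ℕ) : 0 ≤ cauchyTerm q b m := by
  have := qPoch_pos hq1 hq0 hq1.le m
  have := qPoch_pos hb1 hq0 hq1.le m
  unfold cauchyTerm
  positivity

include hq0 hq1 hb1 in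
lemma sum_qFalling_mul_cauchyTerm_succ (N : ℕ) :
    (1 - b * q ^ N) * ∑ m ∈ range (N + 2), qFalling q (N + 1) m * cauchyTerm q b m =
      ∑ m ∈ range (N + 1), qFalling q N m * cauchyTerm q b m := by
  set ρ : ℕ → ℝ := fun m => q ^ (2 * m) * b / (1 - b * q ^ m) with hρ
  have hfirst (m : ℕ) : qFalling q (N + 1) (m + 1) * cauchyTerm q b (m + 1) =
      q ^ (m + 1) * (qFalling q N (m + 1) * cauchyTerm q b (m + 1)) +
        ρ m * (qFalling q N m * cauchyTerm q b m) := by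
    rw [qFalling_succ_succ_eq_pow_mul_add]
    linear_combination qFalling q N m * cauchyTerm_succ hq0 hq1 hb1 m
  have hsecond (m : ℕ) : qFalling q (N + 1) (m + 1) * cauchyTerm q b (m + 1) =
      qFalling q N (m + 1) * cauchyTerm q b (m + 1) +
        q ^ (N - m) * ρ m * (qFalling q N m * cauchyTerm q b m) := by
    rw [qFalling_succ_succ_eq_add_pow_mul]
    linear_combination q ^ (N - m) * qFalling q N m * cauchyTerm_succ hq0 hq1 hb1 m
  have hρ_shift {m : ℕ} (hm : m ≤ N) : q ^ (N - m) * ρ m = b * q ^ N * (q ^ m + ρ m) := by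
    have := (one_sub_mul_pow_pos hb1 hq0 hq1.le m).ne'
    rw [show b * q ^ N = b * q ^ (N - m) * q ^ m by rw [mul_assoc, ← pow_add, Nat.sub_add_cancel hm]]
    simp only [hρ]
    field_simp
    ring
  have htop : qFalling q N (N + 1) * cauchyTerm q b (N + 1) = 0 := by
    rw [qFalling_eq_zero N.lt_succ_self, zero_mul]
  have hshift (c : ℕ → ℝ) (hc : c 0 = 1) :
      ∑ m ∈ range (N + 1), c (m + 1) * (qFalling q N (m + 1) * cauchyTerm q b (m + 1)) + 1 =
        ∑ m ∈ range (N + 1), c m * (qFalling q N m * cauchyTerm q b m) := by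
    have := sum_range_succ' (fun m => c m * (qFalling q N m * cauchyTerm q b m)) (N + 1)
    rw [sum_range_succ, htop, mul_zero, add_zero] at this
    simpa [hc] using this.symm
  have hviaFirst : ∑ m ∈ range (N + 2), qFalling q (N + 1) m * cauchyTerm q b m =
      ∑ m ∈ range (N + 1), (q ^ m + ρ m) * (qFalling q N m * cauchyTerm q b m) := by
    rw [sum_range_succ', sum_congr rfl fun m _ => hfirst m, sum_add_distrib, qFalling_zero_right,
      cauchyTerm_zero, mul_one, add_right_comm, hshift (q ^ ·) (pow_zero q)]
    simp only [add_mul, sum_add_distrib]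
  have hviaSecond : ∑ m ∈ range (N + 2), qFalling q (N + 1) m * cauchyTerm q b m =
      ∑ m ∈ range (N + 1), qFalling q N m * cauchyTerm q b m +
        b * q ^ N * ∑ m ∈ range (N + 1), (q ^ m + ρ m) * (qFalling q N m * cauchyTerm q b m) := by
    have hshift_one := hshift (fun _ => 1) rfl
    simp only [one_mul] at hshift_one
    rw [sum_range_succ', sum_congr rfl fun m _ => hsecond m, sum_add_distrib, qFalling_zero_right,
      cauchyTerm_zero, mul_one, add_right_comm, hshift_one, mul_sum]
    congr 1
    refine sum_congr rfl fun m hm => ?_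
    rw [hρ_shift (Nat.lt_succ_iff.mp (mem_range.mp hm)), mul_assoc]
  linear_combination hviaSecond - b * q ^ N * hviaFirst

include hq0 hq1 hb1 in
lemma sum_qFalling_mul_cauchyTerm (N : ℕ) :
    ∑ m ∈ range (N + 1), qFalling q N m * cauchyTerm q b m = (qPoch b q N)⁻¹ := by
  induction N with
  | zero => simp
  | succ N ih =>
    have := (one_sub_mul_pow_pos hb1 hq0 hq1.le N).ne'
    rw [qPoch_succ, mul_inv, ← ih, ← sum_qFalling_mul_cauchyTerm_succ hq0 hq1 hb1 N]
    field_simp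

include hq0 hq1 hb0 hb1 in
theorem hasSum_cauchyTerm : HasSum (cauchyTerm q b) (qPochInf b q)⁻¹ := by
  have hq : |q| < 1 := by rwa [abs_of_nonneg hq0]
  have ht := cauchyTerm_nonneg hq0 hq1 hb0 hb1
  have hfinite := sum_qFalling_mul_cauchyTerm hq0 hq1 hb1
  have hlim : Tendsto (fun N => (qPoch b q N)⁻¹) atTop (𝓝 (qPochInf b q)⁻¹) :=
    (tendsto_qPoch b hq).inv₀ <| qPochInf_ne_zero hq fun m h =>
      (one_sub_mul_pow_pos hb1 hq0 hq1.le m).ne' (by rw [h, sub_self])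
  have hlower (N : ℕ) : (qPoch b q N)⁻¹ ≤ ∑ m ∈ range (N + 1), cauchyTerm q b m := by
    rw [← hfinite]
    exact sum_le_sum fun m _ => mul_le_of_le_one_left (ht m) (qFalling_le_one hq0 hq1.le N m)
  have hupper (n : ℕ) : ∑ m ∈ range n, cauchyTerm q b m ≤ (qPochInf b q)⁻¹ := by
    have htruncated : Tendsto (fun N => ∑ m ∈ range n, qFalling q N m * cauchyTerm q b m) atTop
        (𝓝 (∑ m ∈ range n, cauchyTerm q b m)) := by
      simpa using tendsto_finsetSum (range n) fun m _ =>
        (tendsto_qFalling hq m).mul_const (cauchyTerm q b m)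
    refine le_of_tendsto_of_tendsto htruncated hlim ?_
    filter_upwards [eventually_ge_atTop n] with N hN
    rw [← hfinite N]
    exact sum_le_sum_of_subset_of_nonneg (range_subset_range.mpr (by omega))
      fun m _ _ => mul_nonneg (qFalling_nonneg hq0 hq1.le N m) (ht m)
  refine (hasSum_iff_tendsto_nat_of_nonneg ht _).mpr ((tendsto_add_atTop_iff_nat 1).mp ?_)
  exact tendsto_of_tendsto_of_tendsto_of_le_of_le hlim tendsto_const_nhds hlower
    fun N => hupper (N + 1)

end Cauchy

/-- Cauchy's formula specialized at b = q^{α+1} (α > -1):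
Σ_{m≥0} q^{m(m-1)} q^{m(α+1)}/((q;q)_m (q^{α+1};q)_m) = 1/(q^{α+1};q)_∞;
equivalently the inverse of this sum equals (q^{α+1};q)_∞. -/
theorem stmt_18 (q α : ℝ) (hq : 0 < q) (hq1 : q < 1) (hα : -1 < α) :
    (∑' m : ℕ,
        q ^ (m*(m-1)) * q ^ ((m:ℝ) * (α+1)) / (qPoch q q m * qPoch (q ^ (α+1)) q m)) =
      (qPochInf (q ^ (α+1)) q)⁻¹
    ∧ (∑' m : ℕ,
        q ^ (2 * (m.choose 2)) * q ^ ((m:ℝ) * (α+1)) /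
          (qPoch q q m * qPoch (q ^ (α+1)) q m))⁻¹ =
      qPochInf (q ^ (α+1)) q := by
  have hb0 : 0 ≤ q ^ (α + 1) := Real.rpow_nonneg hq.le _
  have hb1 : q ^ (α + 1) < 1 := Real.rpow_lt_one hq.le hq1 (by linarith)
  have hpow (m : ℕ) : q ^ ((m : ℝ) * (α + 1)) = (q ^ (α + 1)) ^ m := by
    rw [mul_comm, Real.rpow_mul hq.le, Real.rpow_natCast]
  have hchoose (m : ℕ) : 2 * m.choose 2 = m * (m - 1) := by
    rw [Nat.choose_two_right, Nat.mul_div_cancel' (Nat.even_mul_pred_self m).two_dvd]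
  have hsum := (hasSum_cauchyTerm hq.le hq1 hb0 hb1).tsum_eq
  simp only [cauchyTerm, ← hpow] at hsum
  exact ⟨hsum, by simp only [hchoose, hsum, inv_inv]⟩
end
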